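/- arXiv:1008.4458 — 5 statements merged into one kernel-verified Lean document; each statement's English description precedes it below -/
import Mathlib

section
/- Let b be a regular (non-degenerate) bilinear form on a finite-dimensional vector space V over a field K, with b either symmetric or alternate, and let u ∈ GL(V) be a b-isometry. For every monic polynomial P ∈ K[x] with P(0) ≠ 0, the kernel of P(u) equals the b-orthogonal complement of the image of P^#(u). -/
open Polynomial

/-- The reciprocal polynomial `P^#`. -/
noncomputable def recip {K : Type*} [Field K] (P : K[X]) : K[X] :=
  Polynomial.C (P.coeff 0)⁻¹ * P.reverse

/-
Since `u` is a `B`-isometry, `P(u)` is adjoint to `P(u⁻¹)` with respect to `B`, and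
`P^#(u) = P(0)⁻¹ • P(u⁻¹) ∘ u ^ deg P`. Hence `B x (P^#(u) y) = P(0)⁻¹ * B (P(u) x) (u ^ deg P y)`,
and as `u ^ deg P` is onto, `x` is orthogonal to the range of `P^#(u)` iff `P(u) x` is orthogonal
to everything, i.e. iff `P(u) x = 0` by regularity of `B`.
-/

namespace Polynomial

variable {R A : Type*} [CommSemiring R] [Semiring A] [Algebra R A]

theorem aeval_reflect_eq_aeval_inv_mul_pow (x : Aˣ) {N : ℕ} {f : R[X]} (hf : f.natDegree ≤ N) :
    aeval (x : A) (reflect N f) = aeval (↑x⁻¹ : A) f * ↑x ^ N := by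
  refine induction_with_natDegree_le
    (fun f ↦ aeval (x : A) (reflect N f) = aeval (↑x⁻¹ : A) f * ↑x ^ N) N ?_ ?_ ?_ f hf
  · simp
  · intro n r _ hn
    simp only [revAt_le hn, reflect_C_mul_X_pow, map_mul, aeval_C, map_pow, aeval_X]
    rw [mul_assoc]
    congr 1
    simp only [← Units.val_pow_eq_pow_val, ← Units.val_mul]
    rw [inv_pow, Units.ext_iff.symm, eq_inv_mul_iff_mul_eq, ← pow_add, Nat.add_sub_cancel' hn]
  · intro f g _ _ hf hg
    rw [reflect_add, map_add, map_add, hf, hg, add_mul]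

theorem aeval_reverse_eq_aeval_inv_mul_pow (x : Aˣ) (f : R[X]) :
    aeval (x : A) f.reverse = aeval (↑x⁻¹ : A) f * ↑x ^ f.natDegree :=
  aeval_reflect_eq_aeval_inv_mul_pow x le_rfl

end Polynomial

namespace LinearMap

variable {R M N : Type*} [CommRing R] [AddCommGroup M] [Module R M] [AddCommGroup N] [Module R N]
  {B : M →ₗ[R] M →ₗ[R] N}

theorem isAdjointPair_symm_of_isometry {u : M ≃ₗ[R] M} (hu : ∀ x y, B (u x) (u y) = B x y) :
    IsAdjointPair B B u u.symm := fun x y ↦ by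
  rw [← hu x (u.symm y), u.apply_symm_apply]

theorem IsAdjointPair.pow {f g : Module.End R M} (h : IsAdjointPair B B f g) (n : ℕ) :
    IsAdjointPair B B ⇑(f ^ n) ⇑(g ^ n) := by
  induction n with
  | zero => exact isAdjointPair_one
  | succ n ih => rw [pow_succ, pow_succ']; exact ih.mul h

theorem IsAdjointPair.aeval {f g : Module.End R M} (h : IsAdjointPair B B f g) (p : R[X]) :
    IsAdjointPair B B ⇑(aeval f p) ⇑(aeval g p) := by
  induction p using Polynomial.induction_on' with
  | add p q hp hq => rw [map_add, map_add]; exact hp.add hq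
  | monomial n a => simpa only [aeval_monomial, ← Algebra.smul_def, coe_smul] using (h.pow n).smul a

theorem SeparatingLeft.eq_zero_iff_of_surjective (hB : B.SeparatingLeft)
    {g : M → M} (hg : Function.Surjective g) (x : M) : x = 0 ↔ ∀ y, B x (g y) = 0 := by
  refine ⟨fun hx y ↦ by simp [hx], fun h ↦ hB x fun z ↦ ?_⟩
  obtain ⟨y, rfl⟩ := hg z
  exact h y

end LinearMap

theorem ker_eq_orthogonal_of_range_general {K V : Type*} [Field K] [AddCommGroup V] [Module K V]
    (B : V →ₗ[K] V →ₗ[K] K)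
    (hreg : B.Nondegenerate)
    (u : V ≃ₗ[K] V)
    (hiso : ∀ x y, B (u x) (u y) = B x y)
    (P : K[X]) (hP0 : P.coeff 0 ≠ 0) :
    ∀ x : V,
      x ∈ LinearMap.ker (Polynomial.aeval (u : Module.End K V) P) ↔
        ∀ y : V, B x ((Polynomial.aeval (u : Module.End K V) (recip P)) y) = 0 := by
  intro x
  let U : LinearMap.GeneralLinearGroup K V := .ofLinearEquiv u
  have hadj : LinearMap.IsAdjointPair B B ⇑(aeval (U : Module.End K V) P)
      ⇑(aeval (↑U⁻¹ : Module.End K V) P) :=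
    (LinearMap.isAdjointPair_symm_of_isometry hiso).aeval P
  have hsurj : Function.Surjective ⇑((U : Module.End K V) ^ P.natDegree) :=
    ((Module.End.isUnit_iff _).mp (U ^ P.natDegree).isUnit).2
  rw [LinearMap.mem_ker]
  change aeval (U : Module.End K V) P x = 0 ↔
    ∀ y, B x (aeval (U : Module.End K V) (recip P) y) = 0
  rw [hreg.1.eq_zero_iff_of_surjective hsurj]
  refine forall_congr' fun y ↦ ?_
  rw [recip, map_mul, aeval_C, ← Algebra.smul_def, aeval_reverse_eq_aeval_inv_mul_pow,
    LinearMap.smul_apply, map_smul, Module.End.mul_apply, ← hadj, smul_eq_mul, mul_eq_zero,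
    or_iff_right (inv_ne_zero hP0)]

theorem ker_eq_orthogonal_of_range {K V : Type*} [Field K] [AddCommGroup V] [Module K V]
    [FiniteDimensional K V]
    (B : V →ₗ[K] V →ₗ[K] K)
    (hreg : B.Nondegenerate)
    (hsa : (∀ x y, B x y = B y x) ∨ (∀ x, B x x = 0))
    (u : V ≃ₗ[K] V)
    (hiso : ∀ x y, B (u x) (u y) = B x y)
    (P : K[X]) (hPm : P.Monic) (hP0 : P.coeff 0 ≠ 0) :
    ∀ x : V,
      x ∈ LinearMap.ker (Polynomial.aeval (u : Module.End K V) P) ↔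
        ∀ y : V, B x ((Polynomial.aeval (u : Module.End K V) (recip P)) y) = 0 :=
  ker_eq_orthogonal_of_range_general B hreg u hiso P hP0
end

section
/- Let K be a field of characteristic not 2 and n a natural number. Then there exists an invertible symmetric matrix S ∈ M_{2n+1}(K) such that J^T S J = S, where J = J_{2n+1}(1) is the Jordan block of size 2n+1 with eigenvalue 1. -/
open Matrix

/-- The Jordan block of size `m` with eigenvalue `1`. -/
def jordanOne (K : Type*) [Field K] (m : ℕ) : Matrix (Fin m) (Fin m) K :=
  Matrix.of fun i j => if (i : ℕ) = j ∨ (i : ℕ) + 1 = j then 1 else 0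


namespace OddJordanAux

/-- coefficient of `t^k` in `(2+t)*(1+t)^e` -/
def Ap (e k : ℕ) : ℤ :=
  2 * (e.choose k : ℤ) + (match k with | 0 => 0 | (k+1) => (e.choose k : ℤ))

def B (f k : ℕ) : ℤ :=
  2 * ((k+f).choose f : ℤ) - (match k with | 0 => 0 | (k+1) => ((k+f).choose f : ℤ))

/-- coefficient of `t^k` in `(2+t)*(1+t)^(-f-1)` -/
def Am (f k : ℕ) : ℤ := (-1)^k * B f k

def A (n i k : ℕ) : ℤ := if n < i then Ap (i - n - 1) k else Am (n - i) k

def Sent (n i j : ℕ) : ℤ := if i + j < 2*n then 0 else (-1)^i * A n i (i + j - 2*n)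

lemma Ap_zero (e : ℕ) : Ap e 0 = 2 := by simp [Ap]

lemma Am_zero (f : ℕ) : Am f 0 = 2 := by simp [Am, B]

lemma A_zero (n i : ℕ) : A n i 0 = 2 := by
  unfold A; split <;> simp [Ap_zero, Am_zero]

lemma Ap_pascal (e k : ℕ) : Ap (e+1) (k+1) = Ap e (k+1) + Ap e k := by
  match k with
  | 0 => simp [Ap, Nat.choose_succ_succ]; ring
  | (k+1) =>
    simp only [Ap, Nat.choose_succ_succ]
    push_cast
    ring

lemma B_pascal (f k : ℕ) : B f (k+1) = B (f+1) (k+1) - B (f+1) k := by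
  match k with
  | 0 =>
    have h1 : (1+f).choose f = f+1 := by
      rw [(by omega : 1+f = f+1)]; exact Nat.choose_succ_self_right f
    have h2 : (1+(f+1)).choose (f+1) = f+2 := by
      rw [(by omega : 1+(f+1) = (f+1)+1)]; exact Nat.choose_succ_self_right (f+1)
    simp only [B, h1, h2, Nat.zero_add, Nat.choose_self]
    push_cast
    ring
  | (k+1) =>
    have h1 : (k+1+1+(f+1)).choose (f+1)
        = (k+1+1+f).choose f + (k+1+1+f).choose (f+1) := by
      rw [(by omega : k+1+1+(f+1) = (k+1+1+f)+1)]; exact Nat.choose_succ_succ _ _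
    have h2 : (k+1+1+f).choose (f+1)
        = (k+1+f).choose f + (k+1+f).choose (f+1) := by
      rw [(by omega : k+1+1+f = (k+1+f)+1)]; exact Nat.choose_succ_succ _ _
    have h3 : (k+1+(f+1)).choose (f+1) = (k+1+1+f).choose (f+1) := by
      congr 1; omega
    have h4 : (k+(f+1)).choose (f+1) = (k+1+f).choose (f+1) := by
      congr 1; omega
    simp only [B, h3, h4]
    push_cast [h1, h2]
    ring

lemma Am_pascal (f k : ℕ) : Am f (k+1) = Am (f+1) (k+1) + Am (f+1) k := by
  simp only [Am, B_pascal f k, pow_succ]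
  ring

lemma bridge (k : ℕ) : Ap 0 (k+1) = Am 0 (k+1) + Am 0 k := by
  match k with
  | 0 => simp [Ap, Am, B]
  | (k+1) =>
    simp only [Ap, Am, B, Nat.choose_self, Nat.add_zero, Nat.choose_zero_right,
      Nat.choose_eq_zero_of_lt (by omega : 0 < k+1), Nat.choose_eq_zero_of_lt (by omega : 0 < k+1+1)]
    push_cast
    ring

lemma A_pascal (n i k : ℕ) : A n (i+1) (k+1) = A n i (k+1) + A n i k := by
  rcases lt_trichotomy n i with h | h | h
  · have h1 : n < i + 1 := by omega
    have h2 : i + 1 - n - 1 = (i - n - 1) + 1 := by omega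
    rw [A, A, A, if_pos h1, if_pos h, if_pos h, h2, Ap_pascal]
  · subst h
    rw [A, A, A, if_pos (by omega : n < n+1), if_neg (lt_irrefl n), if_neg (lt_irrefl n),
      (by omega : n + 1 - n - 1 = 0), Nat.sub_self, bridge]
  · have h1 : ¬ n < i + 1 := by omega
    have h2 : n - i = (n - (i+1)) + 1 := by omega
    rw [A, A, A, if_neg h1, if_neg (by omega : ¬ n < i), if_neg (by omega : ¬ n < i), h2, Am_pascal]

lemma A_succ_zero (n i : ℕ) : A n (i+1) 0 = A n i 0 := by simp [A_zero]

lemma Sent_eq_zero {n i j : ℕ} (h : i + j < 2*n) : Sent n i j = 0 := by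
  simp [Sent, h]

lemma Sent_rec (n i j : ℕ) : Sent n i (j+1) + Sent n (i+1) j + Sent n i j = 0 := by
  by_cases h : i + j + 1 < 2*n
  · rw [Sent_eq_zero (by omega), Sent_eq_zero (by omega), Sent_eq_zero (by omega)]
    ring
  · by_cases h0 : i + j + 1 = 2*n
    · rw [Sent_eq_zero (by omega : i + j < 2*n)]
      rw [Sent, Sent, if_neg (by omega : ¬ i + (j+1) < 2*n), if_neg (by omega : ¬ (i+1) + j < 2*n),
        (by omega : i + (j+1) - 2*n = 0), (by omega : (i+1) + j - 2*n = 0), A_succ_zero]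
      ring
    · rw [Sent, Sent, Sent, if_neg (by omega : ¬ i + (j+1) < 2*n),
        if_neg (by omega : ¬ (i+1) + j < 2*n), if_neg (by omega : ¬ i + j < 2*n),
        (by omega : i + (j+1) - 2*n = (i + j - 2*n) + 1),
        (by omega : (i+1) + j - 2*n = (i + j - 2*n) + 1), A_pascal]
      ring

end OddJordanAux

namespace OddJordanAux

lemma Ap_eq_zero {e k : ℕ} (h : e + 1 < k) : Ap e k = 0 := by
  match k with
  | (k+1) =>
    simp only [Ap, Nat.choose_eq_zero_of_lt (by omega : e < k+1),
      Nat.choose_eq_zero_of_lt (by omega : e < k)]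
    ring

lemma key (e f : ℕ) (h : f ≤ e + 1) : Ap e (e+1-f) = B f (e+1-f) := by
  rcases Nat.eq_or_lt_of_le h with h1 | h1
  · rw [← h1, Nat.sub_self, Ap_zero, B, Nat.zero_add, Nat.choose_self]
    push_cast; try ring
  · -- f ≤ e
    have hf : f ≤ e := by omega
    have hk : e + 1 - f = (e - f) + 1 := by omega
    rw [hk]
    match f, hf with
    | 0, _ =>
      simp only [Ap, B, Nat.sub_zero, Nat.add_zero, Nat.choose_self,
        Nat.choose_eq_zero_of_lt (by omega : e < e+1), Nat.choose_zero_right]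
      push_cast; try ring
    | (f+1), hf =>
      have c1 : e.choose (e - (f+1) + 1) = e.choose f := by
        rw [(by omega : e - (f+1) + 1 = e - f)]; exact Nat.choose_symm (by omega : f ≤ e)
      have c2 : e.choose (e - (f+1)) = e.choose (f+1) := by
        exact Nat.choose_symm hf
      have c3 : (e - (f+1) + 1 + (f+1)).choose (f+1)
          = e.choose f + e.choose (f+1) := by
        rw [(by omega : e - (f+1) + 1 + (f+1) = e + 1)]
        exact Nat.choose_succ_succ e f
      have c4 : (e - (f+1) + (f+1)).choose (f+1) = e.choose (f+1) := by
        congr 1; omega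
      simp only [Ap, B, c1, c2, c3, c4]
      push_cast; ring

lemma Sent_symm_aux (n i j : ℕ) (hji : j ≤ i) : Sent n i j = Sent n j i := by
  by_cases h : i + j < 2*n
  · rw [Sent_eq_zero h, Sent_eq_zero (by omega)]
  · by_cases hj : n < j
    · -- both > n : both sides vanish
      rw [Sent, Sent, if_neg h, if_neg (by omega), A, A, if_pos (by omega), if_pos hj,
        Ap_eq_zero (by omega : (i - n - 1) + 1 < i + j - 2*n),
        Ap_eq_zero (by omega : (j - n - 1) + 1 < j + i - 2*n)]
      ring
    · by_cases hi : n < i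
      · -- j ≤ n < i
        have hfe : n - j ≤ (i - n - 1) + 1 := by omega
        have hkk : (i - n - 1) + 1 - (n - j) = i + j - 2*n := by omega
        have hkey := key (i - n - 1) (n - j) hfe
        rw [hkk] at hkey
        rw [Sent, Sent, if_neg h, if_neg (by omega), A, A, if_pos hi, if_neg (by omega),
          (by omega : j + i - 2*n = i + j - 2*n), hkey, Am]
        have hs : ((-1:ℤ))^i = (-1)^j * (-1)^(i + j - 2*n) := by
          have h2 : i = j + (i+j-2*n) + 2*(n-j) := by omega
          calc ((-1:ℤ))^i = (-1)^(j + (i+j-2*n) + 2*(n-j)) := by rw [← h2]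
            _ = (-1)^j * (-1)^(i+j-2*n) * ((-1)^2)^(n-j) := by
                rw [pow_add, pow_add, pow_mul]
            _ = (-1)^j * (-1)^(i + j - 2*n) := by norm_num
        rw [hs]
        ring
      · -- i ≤ n and j ≤ i and i+j ≥ 2n forces i = j = nardon
        have : i = n ∧ j = n := by omega
        rw [this.1, this.2]

lemma Sent_symm (n i j : ℕ) : Sent n i j = Sent n j i := by
  rcases le_total j i with h | h
  · exact Sent_symm_aux n i j h
  · exact (Sent_symm_aux n j i h).symm

lemma Sent_antidiag (n i : ℕ) (h : i ≤ 2*n) : Sent n i (2*n - i) = (-1)^i * 2 := by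
  rw [Sent, if_neg (by omega), (by omega : i + (2*n - i) - 2*n = 0), A_zero]

end OddJordanAux

namespace OddJordanAux

variable {K : Type*} [Field K]

def Nmat (K : Type*) [Field K] (m : ℕ) : Matrix (Fin m) (Fin m) K :=
  Matrix.of fun i j => if (i : ℕ) + 1 = j then 1 else 0

def Smat (K : Type*) [Field K] (n : ℕ) : Matrix (Fin (2*n+1)) (Fin (2*n+1)) K :=
  Matrix.of fun i j => ((Sent n i j : ℤ) : K)

lemma jordan_eq (m : ℕ) : jordanOne K m = 1 + Nmat K m := by
  ext i j
  by_cases h1 : (i : ℕ) = (j : ℕ) <;> by_cases h2 : (i : ℕ) + 1 = (j : ℕ) <;>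
    simp [jordanOne, Nmat, Matrix.one_apply, Fin.ext_iff, h1, h2] <;> omega

lemma mul_Nmat (n : ℕ) (M : Matrix (Fin (2*n+1)) (Fin (2*n+1)) K) (i j : Fin (2*n+1)) :
    (M * Nmat K (2*n+1)) i j =
      if h : (j : ℕ) = 0 then 0 else M i ⟨(j : ℕ) - 1, by omega⟩ := by
  rw [Matrix.mul_apply]
  by_cases h : (j : ℕ) = 0
  · rw [dif_pos h]
    apply Finset.sum_eq_zero
    intro a _
    have : ¬ ((a : ℕ) + 1 = (j : ℕ)) := by omega
    simp [Nmat, this]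
  · rw [dif_neg h]
    rw [Finset.sum_eq_single (⟨(j : ℕ) - 1, by omega⟩ : Fin (2*n+1))]
    · simp [Nmat]
      intro hc
      exfalso; apply hc; omega
    · intro b _ hb
      have : ¬ ((b : ℕ) + 1 = (j : ℕ)) := by
        intro hc
        apply hb
        apply Fin.ext
        simp
        omega
      simp [Nmat, this]
    · intro hc
      exact absurd (Finset.mem_univ _) hc

lemma Nmat_transpose_mul (n : ℕ) (M : Matrix (Fin (2*n+1)) (Fin (2*n+1)) K) (i j : Fin (2*n+1)) :
    ((Nmat K (2*n+1))ᵀ * M) i j =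
      if h : (i : ℕ) = 0 then 0 else M ⟨(i : ℕ) - 1, by omega⟩ j := by
  rw [Matrix.mul_apply]
  by_cases h : (i : ℕ) = 0
  · rw [dif_pos h]
    apply Finset.sum_eq_zero
    intro a _
    have : ¬ ((a : ℕ) + 1 = (i : ℕ)) := by omega
    simp [Nmat, this]
  · rw [dif_neg h]
    rw [Finset.sum_eq_single (⟨(i : ℕ) - 1, by omega⟩ : Fin (2*n+1))]
    · simp [Nmat]
      intro hc
      exfalso; apply hc; omega
    · intro b _ hb
      have : ¬ ((b : ℕ) + 1 = (i : ℕ)) := by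
        intro hc
        apply hb
        apply Fin.ext
        simp
        omega
      simp [Nmat, this]
    · intro hc
      exact absurd (Finset.mem_univ _) hc

lemma main_eq (n : ℕ) :
    (jordanOne K (2*n+1))ᵀ * Smat K n * jordanOne K (2*n+1) = Smat K n := by
  rw [jordan_eq]
  have expand : (1 + Nmat K (2*n+1))ᵀ * Smat K n * (1 + Nmat K (2*n+1)) =
      Smat K n + ((Nmat K (2*n+1))ᵀ * Smat K n +
        (Smat K n * Nmat K (2*n+1) + ((Nmat K (2*n+1))ᵀ * Smat K n) * Nmat K (2*n+1))) := by
    rw [transpose_add, transpose_one]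
    noncomm_ring
  rw [expand]
  have hzero : (Nmat K (2*n+1))ᵀ * Smat K n +
      (Smat K n * Nmat K (2*n+1) + ((Nmat K (2*n+1))ᵀ * Smat K n) * Nmat K (2*n+1)) = 0 := by
    ext i j
    rw [Matrix.add_apply, Matrix.add_apply, Matrix.zero_apply,
      Nmat_transpose_mul, mul_Nmat, mul_Nmat n, Nmat_transpose_mul]
    by_cases hi : (i : ℕ) = 0 <;> by_cases hj : (j : ℕ) = 0
    · simp [hi, hj]
    · rw [dif_pos hi, dif_neg hj, dif_neg hj, dif_pos hi]
      have h0 : Sent n (i : ℕ) ((j : ℕ) - 1) = 0 := by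
        rw [hi]; exact Sent_eq_zero (by have := j.isLt; omega)
      show (0 : K) + (((Sent n (i : ℕ) ((j:ℕ)-1) : ℤ) : K) + 0) = 0
      rw [h0]; simp
    · rw [dif_neg hi, dif_pos hj, dif_pos hj]
      have h0 : Sent n ((i : ℕ) - 1) (j : ℕ) = 0 := by
        rw [hj]; exact Sent_eq_zero (by have := i.isLt; omega)
      show ((Sent n ((i:ℕ)-1) (j : ℕ) : ℤ) : K) + ((0:K) + 0) = 0
      rw [h0]; simp
    · rw [dif_neg hi, dif_neg hj, dif_neg hj, dif_neg hi]
      show ((Sent n ((i:ℕ)-1) (j:ℕ) : ℤ) : K) +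
        (((Sent n (i:ℕ) ((j:ℕ)-1) : ℤ) : K) + ((Sent n ((i:ℕ)-1) ((j:ℕ)-1) : ℤ) : K)) = 0
      have h := Sent_rec n ((i:ℕ)-1) ((j:ℕ)-1)
      rw [(by omega : (i:ℕ)-1+1 = (i:ℕ)), (by omega : (j:ℕ)-1+1 = (j:ℕ))] at h
      have h2 : Sent n ((i:ℕ)-1) (j:ℕ) + (Sent n (i:ℕ) ((j:ℕ)-1) + Sent n ((i:ℕ)-1) ((j:ℕ)-1)) = 0 := by
        linarith
      rw [← Int.cast_add, ← Int.cast_add, h2, Int.cast_zero]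
  rw [hzero, add_zero]

lemma Smat_symm (n : ℕ) : (Smat K n)ᵀ = Smat K n := by
  ext i j
  show ((Sent n (j:ℕ) (i:ℕ) : ℤ) : K) = ((Sent n (i:ℕ) (j:ℕ) : ℤ) : K)
  rw [Sent_symm]

lemma Smat_det_isUnit (n : ℕ) (hchar : (2 : K) ≠ 0) : IsUnit (Smat K n).det := by
  have htri : ((Smat K n).submatrix (Fin.revPerm) id).BlockTriangular id := by
    intro i j hij
    show ((Sent n ((Fin.revPerm i : Fin (2*n+1)) : ℕ) (j:ℕ) : ℤ) : K) = 0
    have hrev : ((Fin.revPerm i : Fin (2*n+1)) : ℕ) = 2*n - (i : ℕ) := by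
      show ((Fin.rev i : Fin (2*n+1)) : ℕ) = 2*n - (i : ℕ)
      rw [Fin.val_rev]; omega
    rw [hrev, Sent_eq_zero (by simp [id] at hij; omega)]
    simp
  have hdet := Matrix.det_of_upperTriangular htri
  have hdiag : ∀ i : Fin (2*n+1),
      ((Smat K n).submatrix (Fin.revPerm) id) i i = (-1 : K)^(i:ℕ) * 2 := by
    intro i
    show ((Sent n ((Fin.revPerm i : Fin (2*n+1)) : ℕ) (i:ℕ) : ℤ) : K) = _
    have hrev : ((Fin.revPerm i : Fin (2*n+1)) : ℕ) = 2*n - (i : ℕ) := by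
      show ((Fin.rev i : Fin (2*n+1)) : ℕ) = 2*n - (i : ℕ)
      rw [Fin.val_rev]; omega
    have hle : (i : ℕ) ≤ 2*n := by omega
    rw [hrev, Sent_symm, Sent_antidiag n (i:ℕ) hle]
    push_cast
    ring
  have hprod : ((Smat K n).submatrix (Fin.revPerm) id).det ≠ 0 := by
    rw [hdet]
    rw [Finset.prod_congr rfl (fun i _ => hdiag i)]
    apply Finset.prod_ne_zero_iff.mpr
    intro i _
    exact mul_ne_zero (pow_ne_zero _ (by norm_num)) hchar
  rw [Matrix.det_permute] at hprod
  have : (Smat K n).det ≠ 0 := by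
    intro h
    rw [h, mul_zero] at hprod
    exact hprod rfl
  exact isUnit_iff_ne_zero.mpr this

end OddJordanAux

theorem exists_symmetric_for_odd_jordan {K : Type*} [Field K] (hchar : (2 : K) ≠ 0) (n : ℕ) :
    ∃ S : Matrix (Fin (2 * n + 1)) (Fin (2 * n + 1)) K,
      IsUnit S.det ∧ Sᵀ = S ∧
      (jordanOne K (2 * n + 1))ᵀ * S * jordanOne K (2 * n + 1) = S :=
  ⟨OddJordanAux.Smat K n, OddJordanAux.Smat_det_isUnit n hchar,
    OddJordanAux.Smat_symm n, OddJordanAux.main_eq n⟩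
end

section
/- Let K be a field of characteristic 2 and n a positive integer. Then there exists a regular quadratic form q on K^{2n} for which the map X ↦ J_{2n}(1)·X is q-orthogonal, i.e., q(JX) = q(X) for all X, where the polar form of q is non-degenerate. -/
open Matrix

/-!
Take `q X = X_{n-1}^2 + ∑_{i,j<n} C(j,i) X_{n-1-i} X_{n+j}`. By Pascal's rule, substituting `J X`
for `X` changes the double sum by `X_n^2`; since `(J X)_{n-1} = X_{n-1} + X_n`, the square changes
by `X_n^2` as well, and in characteristic `2` the two changes cancel. The square contributes
nothing to the polar form, whose matrix is anti-triangular with ones on the anti-diagonal.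
-/

section IntChoose

variable (R : Type*) [Ring R]

def intChoose (j i : ℤ) : R := if 0 ≤ i ∧ i ≤ j then (j.toNat.choose i.toNat : R) else 0

variable {R}

theorem intChoose_natCast (j i : ℕ) : intChoose R j i = j.choose i := by
  by_cases h : i ≤ j
  · simp [intChoose, h]
  · simp [intChoose, h, Nat.choose_eq_zero_of_lt (not_le.mp h)]

theorem intChoose_of_lt {j i : ℤ} (h : j < i) : intChoose R j i = 0 :=
  if_neg fun h' => by omega

theorem intChoose_of_neg {j i : ℤ} (h : j < 0) : intChoose R j i = 0 :=
  if_neg fun h' => by omega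

theorem intChoose_self (j : ℤ) : intChoose R j j = if 0 ≤ j then 1 else 0 := by
  simp [intChoose]

theorem intChoose_succ_succ (j i : ℤ) :
    intChoose R (j + 1) (i + 1) =
      intChoose R j i + intChoose R j (i + 1) + if i = -1 ∧ j = -1 then 1 else 0 := by
  obtain hi | rfl | hi : i < -1 ∨ i = -1 ∨ 0 ≤ i := by omega
  · simp [intChoose, show ¬ 0 ≤ i + 1 by omega, show ¬ 0 ≤ i by omega, hi.ne]
  · unfold intChoose
    split_ifs <;> first | omega | simp
  · rcases lt_or_ge j i with hj | hj
    · simp [intChoose, show ¬ i + 1 ≤ j + 1 by omega, show ¬ i ≤ j by omega,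
        show ¬ i + 1 ≤ j by omega, show i ≠ -1 by omega]
    · lift i to ℕ using hi
      lift j to ℕ using (by omega)
      have hcast : ∀ k : ℕ, (k : ℤ) + 1 = ((k + 1 : ℕ) : ℤ) := fun k => by push_cast; rfl
      rw [hcast, hcast, intChoose_natCast, intChoose_natCast, intChoose_natCast,
        if_neg (by omega), Nat.choose_succ_succ', Nat.cast_add, add_zero]

end IntChoose

section QuadraticForm

variable {R : Type*} [CommRing R] {ι : Type*} [Fintype ι] [DecidableEq ι]

theorem toQuadraticForm'_mulVec (M A : Matrix ι ι R) (x : ι → R) :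
    M.toQuadraticForm' (A *ᵥ x) = (Aᵀ * M * A).toQuadraticForm' x := by
  simp only [toQuadraticForm', LinearMap.BilinMap.toQuadraticMap_apply, toLinearMap₂'_apply']
  rw [← mulVec_mulVec, ← mulVec_mulVec, dotProduct_mulVec x, vecMul_transpose]

theorem toQuadraticForm'_add_single (M : Matrix ι ι R) (i : ι) (x : ι → R) :
    (M + single i i 1).toQuadraticForm' x = M.toQuadraticForm' x + x i ^ 2 := by
  simp only [toQuadraticForm', LinearMap.BilinMap.toQuadraticMap_apply, toLinearMap₂'_apply',
    add_mulVec, dotProduct_add]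
  rw [single_mulVec_eq, dotProduct_smul, dotProduct_single, smul_eq_mul]
  ring

theorem polarBilin_toQuadraticForm' (M : Matrix ι ι R) :
    QuadraticMap.polarBilin M.toQuadraticForm' = toLinearMap₂' R (M + Mᵀ) := by
  ext x y
  simp [toQuadraticForm', LinearMap.BilinMap.polarBilin_toQuadraticMap, toLinearMap₂'_apply',
    dotProduct_comm]

omit [Fintype ι] [DecidableEq ι] in
theorem polarBilin_add_proj_self [CharP R 2] (Q : QuadraticForm R (ι → R)) (i : ι) :
    QuadraticMap.polarBilin (Q + QuadraticMap.proj i i) = QuadraticMap.polarBilin Q := by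
  refine LinearMap.ext₂ fun x y => ?_
  simp only [QuadraticMap.polarBilin_apply_apply, FunLike.coe_add,
    QuadraticMap.polar, QuadraticMap.proj_apply, Pi.add_apply]
  linear_combination (x i * y i) * CharTwo.two_eq_zero (R := R)

theorem det_ne_zero_of_antitriangular [Nontrivial R] {m : ℕ} (A : Matrix (Fin m) (Fin m) R)
    (hzero : ∀ i j : Fin m, (i : ℕ) + j + 1 < m → A i j = 0)
    (hone : ∀ i, A (Fin.rev i) i = 1) : A.det ≠ 0 := by
  have htri : (A.submatrix Fin.revPerm id).IsUpperTriangular := by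
    intro i j hij
    exact hzero _ _ (by simp at hij ⊢; omega)
  have hdet : (1 : R) = Equiv.Perm.sign (Fin.revPerm : Equiv.Perm (Fin m)) * A.det := by
    rw [← det_permute, det_of_isUpperTriangular htri]
    simp [hone]
  exact fun h => one_ne_zero (hdet.trans (by rw [h, mul_zero]))

end QuadraticForm

section JordanBlock

variable {K : Type*} [Field K] {m : ℕ}

theorem sum_jordanOne_mul (a : Fin m) (g : ℤ → K) (hg : g (-1) = 0) :
    ∑ c, jordanOne K m c a * g c = g a + g (a - 1) := by
  rcases Nat.eq_zero_or_pos a with ha | ha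
  · rw [Fintype.sum_eq_single a]
    · simp [jordanOne, ha, hg]
    · intro c hc
      have hc0 : (c : ℕ) ≠ 0 := ha ▸ Fin.val_ne_of_ne hc
      simp [jordanOne, ha, hc0]
  · let a' : Fin m := ⟨a - 1, by omega⟩
    rw [Fintype.sum_eq_add a a' (Fin.ne_of_val_ne (by simp [a']; omega))]
    · simp [jordanOne, a', Nat.sub_add_cancel ha, Nat.cast_sub ha]
    · intro c ⟨hca, hca'⟩
      simp only [jordanOne, of_apply]
      rw [if_neg, zero_mul]
      rintro (h | h)
      · exact hca (Fin.ext h)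
      · exact hca' (Fin.ext (by simp [a']; omega))

theorem jordanOne_mulVec_apply (X : Fin m → K) {i j : Fin m} (hij : (j : ℕ) = i + 1) :
    (jordanOne K m *ᵥ X) i = X i + X j := by
  rw [mulVec, dotProduct, Fintype.sum_eq_add i j (Fin.ne_of_val_ne (by omega))]
  · simp [jordanOne, hij]
  · intro c ⟨hci, hci'⟩
    simp only [jordanOne, of_apply]
    rw [if_neg, zero_mul]
    rintro (h | h)
    · exact hci (Fin.ext h.symm)
    · exact hci' (Fin.ext (by omega))

theorem jordanOne_transpose_mul_mul_apply (f : ℤ → ℤ → K)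
    (hrow : ∀ b : Fin m, f (-1) b = 0) (hcol : ∀ a, f a (-1) = 0) (a b : Fin m) :
    ((jordanOne K m)ᵀ * of (fun i j : Fin m => f i j) * jordanOne K m) a b =
      f a b + f (a - 1) b + f a (b - 1) + f (a - 1) (b - 1) := by
  have hleft : ∀ d : Fin m, ((jordanOne K m)ᵀ * of (fun i j : Fin m => f i j)) a d =
      f a d + f (a - 1) d := fun d => by
    simpa [mul_apply] using sum_jordanOne_mul a (f · d) (hrow d)
  rw [mul_apply]
  simp_rw [hleft, mul_comm _ (jordanOne K m _ b)]
  rw [sum_jordanOne_mul b (fun d => f a d + f (a - 1) d) (by simp [hcol])]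
  ring

end JordanBlock

section PascalBlock

variable (R : Type*) [CommRing R] (n : ℕ)

/-- The matrix entries of `X ↦ ∑_{i,j<n} C(j,i) X_{n-1-i} X_{n+j}`. -/
def pascalEntry (a b : ℤ) : R := intChoose R (b - n) (n - 1 - a)

def pascalBlock : Matrix (Fin (2 * n)) (Fin (2 * n)) R :=
  of fun a b => pascalEntry R n a b

variable {R n}

theorem pascalEntry_defect [CharP R 2] (a b : ℤ) :
    pascalEntry R n (a - 1) b + pascalEntry R n a (b - 1) + pascalEntry R n (a - 1) (b - 1) =
      if a = n ∧ b = n then 1 else 0 := by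
  have h := intChoose_succ_succ (R := R) (b - n - 1) (n - 1 - a)
  simp only [pascalEntry]
  rw [show (b : ℤ) - n = b - n - 1 + 1 by ring,
    show (n : ℤ) - 1 - (a - 1) = n - 1 - a + 1 by ring, show b - 1 - n = b - n - 1 by ring, h]
  have hiff : (n - 1 - a = -1 ∧ b - n - 1 = -1) ↔ (a = n ∧ b = n) := by omega
  simp only [hiff]
  linear_combination
    (intChoose R (b - n - 1) (n - 1 - a) + intChoose R (b - n - 1) (n - 1 - a + 1)) *
      CharTwo.two_eq_zero (R := R)

theorem det_pascalBlock_add_transpose_ne_zero [Nontrivial R] :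
    (pascalBlock R n + (pascalBlock R n)ᵀ).det ≠ 0 := by
  apply det_ne_zero_of_antitriangular
  · intro i j h
    simp only [Matrix.add_apply, transpose_apply, pascalBlock, of_apply, pascalEntry]
    rw [intChoose_of_lt (by omega), intChoose_of_lt (by omega), add_zero]
  · intro i
    have hrev : ((Fin.rev i : ℕ) : ℤ) = 2 * n - 1 - i := by rw [Fin.val_rev]; omega
    simp only [Matrix.add_apply, transpose_apply, pascalBlock, of_apply, pascalEntry, hrev]
    rw [show (n : ℤ) - 1 - (2 * n - 1 - i) = i - n by ring,
      show (2 * n - 1 - i : ℤ) - n = n - 1 - i by ring, intChoose_self, intChoose_self]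
    split_ifs <;> first | omega | simp

theorem jordanOne_transpose_mul_pascalBlock_mul {K : Type*} [Field K] [CharP K 2] (hn : 0 < n) :
    (jordanOne K (2 * n))ᵀ * pascalBlock K n * jordanOne K (2 * n) =
      pascalBlock K n + single ⟨n, by omega⟩ ⟨n, by omega⟩ 1 := by
  ext a b
  rw [pascalBlock, jordanOne_transpose_mul_mul_apply, Matrix.add_apply, of_apply]
  · have hsingle : (single ⟨n, by omega⟩ ⟨n, by omega⟩ 1 : Matrix _ _ K) a b =
        if (a : ℤ) = n ∧ (b : ℤ) = n then 1 else 0 := by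
      simp [single_apply, Fin.ext_iff, eq_comm]
    rw [hsingle, ← pascalEntry_defect]
    ring
  · intro b; exact intChoose_of_lt (by omega)
  · intro a; exact intChoose_of_neg (by omega)

end PascalBlock

theorem exists_quadratic_for_even_jordan_char_two {K : Type*} [Field K] [CharP K 2]
    (n : ℕ) (hn : 0 < n) :
    ∃ q : QuadraticForm K (Fin (2 * n) → K),
      (QuadraticMap.polarBilin q).Nondegenerate ∧
      (∀ X : Fin (2 * n) → K, q (jordanOne K (2 * n) *ᵥ X) = q X) := by
  let i₀ : Fin (2 * n) := ⟨n - 1, by omega⟩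
  let i₁ : Fin (2 * n) := ⟨n, by omega⟩
  refine ⟨(pascalBlock K n).toQuadraticForm' + QuadraticMap.proj i₀ i₀, ?_, fun X => ?_⟩
  · rw [polarBilin_add_proj_self, polarBilin_toQuadraticForm']
    exact (nondegenerate_of_det_ne_zero det_pascalBlock_add_transpose_ne_zero).toLinearMap₂'
  · simp only [_root_.add_apply, QuadraticMap.proj_apply, toQuadraticForm'_mulVec,
      jordanOne_transpose_mul_pascalBlock_mul hn, toQuadraticForm'_add_single,
      jordanOne_mulVec_apply X (i := i₀) (j := i₁) (by simp [i₀, i₁]; omega)]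
    linear_combination (X i₁ ^ 2 + X i₀ * X i₁) * CharTwo.two_eq_zero (R := K)
end

section
/- Let K be an infinite field, L a field extension of K, and A ∈ M_n(K). If there exists an invertible symmetric matrix S ∈ M_n(L) with AᵀSA = S, then there exists an invertible symmetric matrix S' ∈ M_n(K) with AᵀS'A = S'. -/
/-!
Write `S = ∑ₖ vₖ • Mₖ` with `vₖ ∈ L` linearly independent over `K` and `Mₖ ∈ Mₙ(K)`. Symmetry and
`AᵀSA = S` are `K`-linear conditions, so linear independence transfers them to every `Mₖ`, hence to
every `∑ₖ cₖ • Mₖ` with `cₖ ∈ K`. The polynomial `det (∑ₖ Xₖ • Mₖ)` is nonzero because its value at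
`v` is `det S`, so over the infinite field `K` it has a non-vanishing point `c`.
-/

open Matrix MvPolynomial

namespace Matrix

variable {K L ι m n : Type*}

theorem sum_smul_map_injective [CommSemiring K] [CommSemiring L] [Algebra K L] [Fintype ι]
    {v : ι → L} (hv : LinearIndependent K v) {M N : ι → Matrix m n K}
    (h : ∑ k, v k • (M k).map (algebraMap K L) = ∑ k, v k • (N k).map (algebraMap K L)) :
    M = N := by
  funext k
  ext i j
  have hij : ∑ k, M k i j • v k = ∑ k, N k i j • v k := by
    simpa [Matrix.sum_apply, Algebra.smul_def, mul_comm] using congrFun (congrFun h i) j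
  exact Fintype.linearIndependent_iffₛ.mp hv _ _ hij k

theorem exists_linearIndependent_sum_smul_map [Field K] [CommRing L] [Algebra K L] [Fintype m]
    [Fintype n] (S : Matrix m n L) :
    ∃ (r : ℕ) (v : Fin r → L) (M : Fin r → Matrix m n K),
      LinearIndependent K v ∧ ∑ k, v k • (M k).map (algebraMap K L) = S := by
  let W := Submodule.span K (Set.range fun p : m × n => S p.1 p.2)
  have : FiniteDimensional K W := FiniteDimensional.span_of_finite K (Set.finite_range _)
  let b := Module.finBasis K W
  have hmem : ∀ i j, S i j ∈ W := fun i j => Submodule.subset_span ⟨(i, j), rfl⟩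
  refine ⟨_, fun k => b k, fun k => of fun i j => b.repr ⟨S i j, hmem i j⟩ k,
    b.linearIndependent.map' W.subtype W.ker_subtype, ?_⟩
  ext i j
  have hrepr := congrArg Subtype.val (b.sum_repr ⟨S i j, hmem i j⟩)
  simp only [Submodule.coe_sum, Submodule.coe_smul, Algebra.smul_def] at hrepr
  simpa only [Matrix.sum_apply, smul_apply, map_apply, of_apply, smul_eq_mul, mul_comm] using hrepr

noncomputable def genericCombination [CommSemiring K] [Fintype ι] (M : ι → Matrix m n K) :
    Matrix m n (MvPolynomial ι K) :=
  ∑ k, (X k : MvPolynomial ι K) • (M k).map C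

theorem aeval_det_genericCombination [CommRing K] [CommRing L] [Algebra K L] [Fintype ι]
    [Fintype n] [DecidableEq n] (M : ι → Matrix n n K) (v : ι → L) :
    aeval v (genericCombination M).det = (∑ k, v k • (M k).map (algebraMap K L)).det := by
  rw [AlgHom.map_det]
  congr 1
  ext i j
  simp [genericCombination, Matrix.sum_apply]

theorem exists_det_sum_smul_ne_zero [CommRing K] [IsDomain K] [Infinite K] [CommRing L]
    [Algebra K L] [Fintype ι] [Fintype n] [DecidableEq n] (v : ι → L)
    (M : ι → Matrix n n K) (h : (∑ k, v k • (M k).map (algebraMap K L)).det ≠ 0) :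
    ∃ c : ι → K, (∑ k, c k • M k).det ≠ 0 := by
  have hP : (genericCombination M).det ≠ 0 := fun hP =>
    h (by rw [← aeval_det_genericCombination, hP, map_zero])
  obtain ⟨c, hc⟩ : ∃ c, eval c (genericCombination M).det ≠ 0 := by
    by_contra! hc
    exact hP (MvPolynomial.funext fun c => by rw [hc, map_zero])
  have hdet := aeval_det_genericCombination M c
  simp only [Algebra.algebraMap_self, RingHom.coe_id, map_id] at hdet
  exact ⟨c, hdet ▸ hc⟩

end Matrix

theorem descend_symmetric_isometry {K L : Type*} [Field K] [Infinite K] [Field L]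
    [Algebra K L] {n : ℕ} (A : Matrix (Fin n) (Fin n) K)
    (h : ∃ S : Matrix (Fin n) (Fin n) L, IsUnit S.det ∧ Sᵀ = S ∧
      (A.map (algebraMap K L))ᵀ * S * A.map (algebraMap K L) = S) :
    ∃ S' : Matrix (Fin n) (Fin n) K, IsUnit S'.det ∧ S'ᵀ = S' ∧ Aᵀ * S' * A = S' := by
  obtain ⟨S, hdet, hsym, hiso⟩ := h
  obtain ⟨r, v, M, hv, rfl⟩ := exists_linearIndependent_sum_smul_map (K := K) S
  have hMsym : (fun k => (M k)ᵀ) = M := by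
    refine sum_smul_map_injective hv (Eq.trans ?_ hsym)
    simp [transpose_sum, transpose_map]
  have hMiso : (fun k => Aᵀ * M k * A) = M := by
    refine sum_smul_map_injective hv (Eq.trans ?_ hiso)
    simp [Matrix.mul_sum, Matrix.sum_mul, transpose_map]
  obtain ⟨c, hc⟩ := exists_det_sum_smul_ne_zero v M hdet.ne_zero
  refine ⟨∑ k, c k • M k, isUnit_iff_ne_zero.mpr hc, ?_, ?_⟩
  · simp [transpose_sum, congrFun hMsym]
  · simp [Matrix.mul_sum, Matrix.sum_mul, congrFun hMiso]
end

section
/- Let K ⊆ L be a Galois extension of finite fields, σ a fixed element of Gal(L/K), and y ∈ L a generator of L as a K-algebra. If B : L × L → K is a symmetric K-bilinear form satisfying B(ya, yb) = B(a,b) for all a,b ∈ L and y·σ(y) = 1, then there exists a unique c ∈ L such that B(a,b) = Tr_{L/K}(c·σ(a)·b) for all a,b ∈ L. -/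
/-!
Since the trace form is nondegenerate, `B a b = Tr (f a * b)` for a unique `K`-linear
`f : L → L`. The invariance `B (y a) (y b) = B a b` together with `y σ(y) = 1` becomes
`f (y a) = σ(y) f a`, and since `y` generates `L` this forces `f a = f 1 * σ a`.
-/

open Algebra

theorem LinearMap.eq_mul_map_of_adjoin_eq_top {K A : Type*} [CommSemiring K] [CommSemiring A]
    [Algebra K A] (f : A →ₗ[K] A) (σ : A →ₐ[K] A) {y : A} (hy : adjoin K {y} = ⊤)
    (hf : ∀ a, f (y * a) = σ y * f a) (a : A) : f a = f 1 * σ a := by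
  have key : ∀ x ∈ adjoin K {y}, ∀ b, f (x * b) = σ x * f b := by
    intro x hx
    induction hx using adjoin_induction with
    | mem x hx => rw [Set.mem_singleton_iff.mp hx]; exact hf
    | algebraMap r => intro b; rw [← smul_def, map_smul, AlgHom.commutes, smul_def]
    | add x x' _ _ hx hx' => intro b; rw [add_mul, map_add, hx, hx', map_add, add_mul]
    | mul x x' _ _ hx hx' => intro b; rw [mul_assoc, hx, hx', map_mul, mul_assoc]
  simpa [mul_comm] using key a (hy ▸ mem_top) 1

section TraceForm

variable {K L : Type*} [Field K] [Field L] [Algebra K L] [FiniteDimensional K L]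
  [Algebra.IsSeparable K L]

variable (K) in
theorem Algebra.eq_of_trace_mul_eq {c c' : L} (h : ∀ b, trace K L (c * b) = trace K L (c' * b)) :
    c = c' :=
  sub_eq_zero.mp <| (traceForm_nondegenerate K L).1 _ fun b => by
    simp [traceForm_apply, h b]

theorem Algebra.exists_linearMap_trace_mul_eq (B : L →ₗ[K] L →ₗ[K] K) :
    ∃ f : L →ₗ[K] L, ∀ a b, B a b = trace K L (f a * b) :=
  ⟨((traceForm K L).toDual (traceForm_nondegenerate K L)).symm.toLinearMap ∘ₗ B,
    fun a b => (LinearMap.BilinForm.apply_toDual_symm_apply (hB := traceForm_nondegenerate K L)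
      (B a) b).symm⟩

end TraceForm

theorem exists_unique_hermitian_repr_general {K L : Type*} [Field K] [Field L]
    [Fintype L] [Algebra K L] [IsGalois K L]
    (sigma : L ≃ₐ[K] L) (y : L)
    (hy : Algebra.adjoin K {y} = ⊤)
    (hysigma : y * sigma y = 1)
    (B : L →ₗ[K] L →ₗ[K] K)
    (hinv : ∀ a b : L, B (y * a) (y * b) = B a b) :
    ∃! c : L, ∀ a b : L, B a b = Algebra.trace K L (c * sigma a * b) := by
  obtain ⟨f, hf⟩ := exists_linearMap_trace_mul_eq B
  have hfy : ∀ a, f (y * a) = sigma y * f a := fun a => eq_of_trace_mul_eq K fun b => by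
    calc trace K L (f (y * a) * b) = B (y * a) (y * (sigma y * b)) := by
          rw [← mul_assoc, hysigma, one_mul, hf]
      _ = trace K L (sigma y * f a * b) := by rw [hinv, hf]; ring_nf
  have hfa := LinearMap.eq_mul_map_of_adjoin_eq_top f (sigma : L →ₐ[K] L) hy hfy
  refine ⟨f 1, fun a b => by rw [hf, hfa]; rfl, fun c hc => eq_of_trace_mul_eq K fun b => ?_⟩
  simpa [← hf] using (hc 1 b).symm

theorem exists_unique_hermitian_repr {K L : Type*} [Field K] [Field L]
    [Fintype K] [Fintype L] [Algebra K L] [IsGalois K L]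
    (sigma : L ≃ₐ[K] L) (y : L)
    (hy : Algebra.adjoin K {y} = ⊤)
    (hysigma : y * sigma y = 1)
    (B : L →ₗ[K] L →ₗ[K] K)
    (hsymm : ∀ a b : L, B a b = B b a)
    (hinv : ∀ a b : L, B (y * a) (y * b) = B a b) :
    ∃! c : L, ∀ a b : L, B a b = Algebra.trace K L (c * sigma a * b) :=
  exists_unique_hermitian_repr_general sigma y hy hysigma B hinv
end
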